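/- arXiv:2205.08634 — 7 statements merged into one kernel-verified Lean document; each statement's English description precedes it below -/
import Mathlib

section
/- Let H be a real inner product space and let T be a subset of the closed unit ball of H. Let k ≥ 1 be an integer and let 0 < ε ≤ 1. If T admits a finite ε/2-cover of cardinality N (i.e. there is a finite set U of cardinality N, contained in the closed unit ball, such that every point of T is within distance ε/2 of some point of U), then conv_k(T) admits a finite ε-cover of cardinality at most (6·N/ε)^k. In particular, log N(conv_k(T), ε) ≤ k·(log N(T, ε/2) + log(6/ε)). -/
/-!
Round the weights of a convex combination `∑ lᵢ tᵢ` to multiples of `1 / M` and replace each `tᵢ`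
by a nearby point of the cover. Rounding down and then up on the `r` coordinates with the largest
fractional parts costs at most `k / (2M)` in `ℓ¹` (Chebyshev's sum inequality), so `M = ⌈k / ε⌉`
gives total error `ε / 2 + ε / 2`. The rounded combinations number at most
`N ^ k · C(k + M - 1, k) ≤ N ^ k · (2e / ε) ^ k` by stars and bars and `r ^ r / r! ≤ e ^ r`.
-/

open Metric

/-- `convk T k` is the set of convex combinations of at most `k` points of `T`. -/
def convk {H : Type*} [AddCommMonoid H] [Module ℝ H] (T : Set H) (k : ℕ) : Set H :=
  {x | ∃ (t : Fin k → H) (l : Fin k → ℝ),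
    (∀ i, t i ∈ T) ∧ (∀ i, 0 ≤ l i) ∧ (∑ i, l i) = 1 ∧ x = ∑ i, l i • t i}

open Finset Real

theorem choose_le_exp_one_mul_pow {n r : ℕ} {c : ℝ} (hc : 0 ≤ c) (h : (n : ℝ) ≤ c * r) :
    (n.choose r : ℝ) ≤ (exp 1 * c) ^ r := by
  calc (n.choose r : ℝ) ≤ n ^ r / r.factorial := Nat.choose_le_pow_div r n
    _ ≤ (c * r) ^ r / r.factorial := by gcongr
    _ = c ^ r * ((r : ℝ) ^ r / r.factorial) := by ring
    _ ≤ c ^ r * exp r := by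
        gcongr
        exact pow_div_factorial_le_exp _ (Nat.cast_nonneg r) r
    _ = (exp 1 * c) ^ r := by rw [mul_pow, ← exp_nat_mul, mul_one, mul_comm]

theorem multichoose_le_choose {k M : ℕ} (h : k ≤ M) : k.multichoose M ≤ (k + M - 1).choose k := by
  obtain _ | j := k
  · cases M <;> simp
  · rw [Nat.multichoose_eq, show j + 1 + M - 1 = j + M by omega, ← Nat.choose_symm_add]
    have hpascal := Nat.choose_succ_right_eq (j + M) j
    rw [Nat.add_sub_cancel_left] at hpascal
    refine Nat.le_of_mul_le_mul_right (c := M) ?_ (by omega)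
    rw [← hpascal]
    gcongr

section Rounding

variable {ι : Type*} [Fintype ι]

/-- An `r`-subset maximising `∑ i ∈ S, f i` consists of `r` largest values of `f`. -/
theorem exists_card_eq_monovary_ite [DecidableEq ι] (f : ι → ℝ) {r : ℕ} (hr : r ≤ Fintype.card ι) :
    ∃ S : Finset ι, #S = r ∧ Monovary f fun i => if i ∈ S then (1 : ℝ) else 0 := by
  obtain ⟨S, hS, hmax⟩ := exists_max_image (univ.powersetCard r) (fun S => ∑ i ∈ S, f i)
    (powersetCard_nonempty.2 (by simpa using hr))
  rw [mem_powersetCard_univ] at hS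
  refine ⟨S, hS, fun i j hij => ?_⟩
  obtain ⟨hi, hj⟩ : i ∉ S ∧ j ∈ S := by
    by_cases hi : i ∈ S <;> by_cases hj : j ∈ S <;> simp_all; linarith
  have hswap := hmax (insert i (S.erase j)) <| by
    rw [mem_powersetCard_univ, card_insert_of_notMem fun h => hi (mem_of_mem_erase h),
      card_erase_of_mem hj, hS]
    have := card_pos.2 ⟨j, hj⟩
    omega
  rw [sum_insert fun h => hi (mem_of_mem_erase h), sum_erase_eq_sub hj] at hswap
  linarith

theorem exists_card_eq_sum_abs_sub_ite_le [DecidableEq ι] {f : ι → ℝ} (hf0 : ∀ i, 0 ≤ f i)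
    (hf1 : ∀ i, f i ≤ 1) {r : ℕ} (hr : ∑ i, f i = r) :
    ∃ S : Finset ι, #S = r ∧ ∑ i, |f i - if i ∈ S then 1 else 0| ≤ Fintype.card ι / 2 := by
  have hrk : r ≤ Fintype.card ι := by
    have : (r : ℝ) ≤ Fintype.card ι := hr ▸ by simpa using sum_le_sum fun i (_ : i ∈ univ) => hf1 i
    exact_mod_cast this
  obtain ⟨S, hS, hmono⟩ := exists_card_eq_monovary_ite f hrk
  set g : ι → ℝ := fun i => if i ∈ S then 1 else 0 with hg_def
  have hg : ∑ i, g i = r := by simp [hg_def, hS]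
  have habs (i : ι) : |f i - g i| = f i + g i - 2 * (f i * g i) := by
    by_cases hi : i ∈ S
    · simp only [hg_def, hi, if_true]
      rw [abs_of_nonpos (by linarith [hf1 i])]
      ring
    · simp only [hg_def, hi, if_false]
      rw [abs_of_nonneg (by linarith [hf0 i])]
      ring
  have hcheb := hmono.sum_mul_sum_le_card_mul_sum
  have hfg := sum_nonneg fun i (_ : i ∈ univ) => mul_nonneg (hf0 i) (by positivity : 0 ≤ g i)
  refine ⟨S, hS, show ∑ i, |f i - g i| ≤ _ from ?_⟩
  simp_rw [habs]
  rw [sum_sub_distrib, sum_add_distrib, ← mul_sum, hr, hg]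
  rw [hr, hg] at hcheb
  obtain hι | hι := (Fintype.card ι).eq_zero_or_pos
  · obtain rfl : r = 0 := by omega
    simp only [hι, Nat.cast_zero]
    linarith
  · have hι' : (0 : ℝ) < Fintype.card ι := by exact_mod_cast hι
    -- with `s = ∑ f g ≥ r ^ 2 / card ι` (Chebyshev): `2 (r - s) ≤ 2 r (card ι - r) / card ι`
    refine le_of_mul_le_mul_left ?_ hι'
    nlinarith [sq_nonneg ((Fintype.card ι : ℝ) - 2 * r)]

theorem exists_nat_sum_eq_sum_abs_sub_le {x : ι → ℝ} (hx : ∀ i, 0 ≤ x i) {M : ℕ}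
    (hsum : ∑ i, x i = M) :
    ∃ m : ι → ℕ, ∑ i, m i = M ∧ ∑ i, |x i - m i| ≤ Fintype.card ι / 2 := by
  classical
  have hfloor : ∑ i, ⌊x i⌋₊ ≤ M := by
    have : ((∑ i, ⌊x i⌋₊ : ℕ) : ℝ) ≤ M := by
      push_cast
      exact hsum ▸ sum_le_sum fun i _ => Nat.floor_le (hx i)
    exact_mod_cast this
  obtain ⟨S, hS, herr⟩ := exists_card_eq_sum_abs_sub_ite_le (f := fun i => x i - ⌊x i⌋₊)
    (fun i => sub_nonneg.2 (Nat.floor_le (hx i)))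
    (fun i => by linarith [Nat.lt_floor_add_one (x i)])
    (r := M - ∑ i, ⌊x i⌋₊) (by push_cast [Nat.cast_sub hfloor]; rw [sum_sub_distrib, hsum])
  refine ⟨fun i => ⌊x i⌋₊ + if i ∈ S then 1 else 0, ?_, ?_⟩
  · rw [sum_add_distrib, sum_boole, Nat.cast_id, filter_mem_eq_inter, univ_inter, hS]
    omega
  · convert herr using 3 with i
    push_cast
    ring

end Rounding

section Net

variable {E : Type*} [SeminormedAddCommGroup E] [NormedSpace ℝ E]

theorem dist_sum_smul_le {ι : Type*} (s : Finset ι) {l : ι → ℝ} (hl : ∀ i ∈ s, 0 ≤ l i)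
    (w : ι → ℝ) (t u : ι → E) :
    dist (∑ i ∈ s, l i • t i) (∑ i ∈ s, w i • u i)
      ≤ ∑ i ∈ s, l i * dist (t i) (u i) + ∑ i ∈ s, |l i - w i| * ‖u i‖ := by
  rw [dist_eq_norm, ← sum_sub_distrib, ← sum_add_distrib]
  refine (norm_sum_le _ _).trans (sum_le_sum fun i hi => ?_)
  calc ‖l i • t i - w i • u i‖ = ‖l i • (t i - u i) + (l i - w i) • u i‖ := by
        rw [smul_sub, sub_smul]; abel_nf
    _ ≤ l i * dist (t i) (u i) + |l i - w i| * ‖u i‖ := by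
        refine (norm_add_le _ _).trans_eq ?_
        rw [norm_smul, norm_smul, Real.norm_of_nonneg (hl i hi), Real.norm_eq_abs, dist_eq_norm]

open Classical in
/-- A weight vector `(m i / M)ᵢ` with `∑ i, m i = M` is encoded as the multiset of size `M` on
`Fin k` with multiplicities `m`. -/
noncomputable def gridConvk (U : Finset E) (k M : ℕ) : Finset E :=
  ((Fintype.piFinset fun _ : Fin k => U) ×ˢ (univ : Finset (Sym (Fin k) M))).image
    fun p => ∑ i, (((p.2 : Multiset (Fin k)).count i : ℝ) / M) • p.1 i

theorem card_gridConvk_le (U : Finset E) (k M : ℕ) :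
    #(gridConvk U k M) ≤ #U ^ k * k.multichoose M := by
  classical
  exact card_image_le.trans (by simp [Sym.card_sym_eq_multichoose])

theorem sum_smul_mem_gridConvk {U : Finset E} {k M : ℕ} {u : Fin k → E} (hu : ∀ i, u i ∈ U)
    {m : Fin k → ℕ} (hm : ∑ i, m i = M) :
    ∑ i, ((m i : ℝ) / M) • u i ∈ gridConvk U k M := by
  classical
  set s := (Sym.equivNatSumOfFintype (Fin k) M).symm ⟨m, hm⟩
  have hcount (i : Fin k) : (s : Multiset (Fin k)).count i = m i := by
    rw [← Sym.coe_equivNatSumOfFintype_apply_apply, Equiv.apply_symm_apply]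
  exact mem_image.2 ⟨(u, s), by simp [hu], by simp only [hcount]⟩

theorem exists_mem_gridConvk_dist_le {T : Set E} {U : Finset E}
    (hU : ∀ u ∈ U, u ∈ closedBall (0 : E) 1) {δ : ℝ} (hcover : ∀ x ∈ T, ∃ u ∈ U, dist x u ≤ δ)
    {k M : ℕ} (hM : 0 < M) {x : E} (hx : x ∈ convk T k) :
    ∃ w ∈ gridConvk U k M, dist x w ≤ δ + k / (2 * M) := by
  obtain ⟨t, l, ht, hl0, hl1, rfl⟩ := hx
  choose u hu hut using fun i => hcover (t i) (ht i)
  have hM' : (0 : ℝ) < M := by exact_mod_cast hM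
  obtain ⟨m, hm, herr⟩ := exists_nat_sum_eq_sum_abs_sub_le (x := fun i => M * l i)
    (fun i => mul_nonneg hM'.le (hl0 i)) (by rw [← mul_sum, hl1, mul_one])
  refine ⟨_, sum_smul_mem_gridConvk hu hm, ?_⟩
  calc dist (∑ i, l i • t i) (∑ i, ((m i : ℝ) / M) • u i)
      ≤ ∑ i, l i * dist (t i) (u i) + ∑ i, |l i - m i / M| * ‖u i‖ :=
        dist_sum_smul_le _ (fun i _ => hl0 i) _ _ _
    _ ≤ ∑ i, l i * δ + ∑ i, |M * l i - m i| / M := by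
        gcongr with i _ i _
        · exact hl0 i
        · exact hut i
        · rw [show l i - m i / M = (M * l i - m i) / M by field_simp, abs_div, abs_of_pos hM']
          exact mul_le_of_le_one_right (by positivity) (by simpa using hU _ (hu i))
    _ ≤ δ + k / (2 * M) := by
        rw [← sum_mul, hl1, one_mul, ← sum_div, ← div_div]
        gcongr
        simpa using herr

theorem card_gridConvk_ceil_div_le (U : Finset E) {k : ℕ} (hk : 1 ≤ k) {ε : ℝ} (hε : 0 < ε)
    (hε1 : ε ≤ 1) : (#(gridConvk U k ⌈k / ε⌉₊) : ℝ) ≤ (6 * #U / ε) ^ k := by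
  set M := ⌈k / ε⌉₊
  have hk_le_M : k ≤ M := by exact_mod_cast (le_div_self k.cast_nonneg hε hε1).trans (Nat.le_ceil _)
  have hkM_le : ((k + M - 1 : ℕ) : ℝ) ≤ 2 / ε * k := by
    have hMk : (M : ℝ) < k / ε + 1 := Nat.ceil_lt_add_one (by positivity)
    rw [Nat.cast_sub (by omega), Nat.cast_add, Nat.cast_one,
      show 2 / ε * k = k / ε + k / ε by ring]
    linarith [le_div_self k.cast_nonneg hε hε1]
  calc (#(gridConvk U k M) : ℝ) ≤ #U ^ k * ((k + M - 1).choose k : ℕ) := by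
        exact_mod_cast (card_gridConvk_le U k M).trans
          (Nat.mul_le_mul_left _ (multichoose_le_choose hk_le_M))
    _ ≤ #U ^ k * (exp 1 * (2 / ε)) ^ k := by
        gcongr
        exact choose_le_exp_one_mul_pow (by positivity) hkM_le
    _ ≤ (6 * #U / ε) ^ k := by
        rw [← mul_pow, show 6 * (#U : ℝ) / ε = #U * (3 * (2 / ε)) by ring]
        gcongr
        exact exp_one_lt_d9.le.trans (by norm_num)

end Net

theorem stmt0_general {H : Type*} [NormedAddCommGroup H] [InnerProductSpace ℝ H]
    (T : Set H)
    (k : ℕ) (hk : 1 ≤ k) (ε : ℝ) (hε : 0 < ε) (hε1 : ε ≤ 1)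
    (N : ℕ) (U : Finset H) (hUcard : U.card = N)
    (hUball : ∀ u ∈ U, u ∈ closedBall (0 : H) 1)
    (hUcover : ∀ x ∈ T, ∃ u ∈ U, dist x u ≤ ε / 2) :
    ∃ W : Finset H, (W.card : ℝ) ≤ (6 * N / ε) ^ k ∧
      ∀ x ∈ convk T k, ∃ w ∈ W, dist x w ≤ ε := by
  set M := ⌈k / ε⌉₊
  have hM : 0 < M := Nat.ceil_pos.2 (div_pos (by exact_mod_cast hk) hε)
  refine ⟨gridConvk U k M, hUcard ▸ card_gridConvk_ceil_div_le U hk hε hε1, fun x hx => ?_⟩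
  obtain ⟨w, hw, hxw⟩ := exists_mem_gridConvk_dist_le hUball hUcover hM hx
  refine ⟨w, hw, hxw.trans ?_⟩
  have hkεM : (k : ℝ) ≤ ε * M := by
    rw [← div_le_iff₀' hε]
    exact Nat.le_ceil _
  have : (k : ℝ) / (2 * M) ≤ ε / 2 := by
    rw [div_le_div_iff₀ (by positivity) two_pos]
    linarith
  linarith

/-- If `T` (a subset of the unit ball of a real inner product space) admits a finite
`ε/2`-cover of cardinality `N` inside the unit ball, then `conv_k(T)` admits a finite
`ε`-cover of cardinality at most `(6·N/ε)^k`. -/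
theorem stmt0 {H : Type*} [NormedAddCommGroup H] [InnerProductSpace ℝ H]
    (T : Set H) (hT : T ⊆ closedBall (0 : H) 1)
    (k : ℕ) (hk : 1 ≤ k) (ε : ℝ) (hε : 0 < ε) (hε1 : ε ≤ 1)
    (N : ℕ) (U : Finset H) (hUcard : U.card = N)
    (hUball : ∀ u ∈ U, u ∈ closedBall (0 : H) 1)
    (hUcover : ∀ x ∈ T, ∃ u ∈ U, dist x u ≤ ε / 2) :
    ∃ W : Finset H, (W.card : ℝ) ≤ (6 * N / ε) ^ k ∧
      ∀ x ∈ convk T k, ∃ w ∈ W, dist x w ≤ ε :=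
  stmt0_general T k hk ε hε hε1 N U hUcard hUball hUcover
end

section
/- Let V ⊆ ℝ^d be a finite set of n points contained in the closed unit Euclidean ball, let P = conv(V) be its convex hull, let t ≥ 1 be an integer, and let 0 < ε ≤ 1. Suppose every point p ∈ P lies within Euclidean distance ε/2 of conv_t(V) (i.e. P ⊆ conv_t(V) + (ε/2)·B₂(d)). Then P admits a finite ε-cover of cardinality at most (e³·n/ε)^t; in particular, log N(P, ε) ≤ t·(3 + log n + log(1/ε)), i.e. t ≥ log N(P, ε) / (3 + log n + log(1/ε)). -/
/-!
Round the weights of a `t`-term convex combination of points of `V` down to multiples of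
`1/m`, with `m = ⌈2t/ε⌉`. Since the points lie in the unit ball, this moves the combination by
at most `t/m ≤ ε/2`. A rounded combination is determined by `t` points of `V` and a distribution
of `m` units of mass over `t + 1` slots (one slot collecting the mass lost in rounding), so there
are at most `n^t · C(t+m, t) ≤ n^t (e(t+m)/t)^t ≤ (e³n/ε)^t` of them, and by the hypothesis they
form an `ε`-cover of `conv V`.
-/

open Metric

open Finset

theorem Nat.choose_le_exp_mul_div_pow (n k : ℕ) :
    (n.choose k : ℝ) ≤ (Real.exp 1 * n / k) ^ k := by
  rcases k.eq_zero_or_pos with rfl | hk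
  · simp
  have hk' : (k : ℝ) ≠ 0 := by positivity
  calc (n.choose k : ℝ) ≤ (n : ℝ) ^ k / k.factorial := Nat.choose_le_pow_div k n
    _ = ((n : ℝ) / k) ^ k * ((k : ℝ) ^ k / k.factorial) := by
        rw [div_pow, div_mul_div_cancel₀ (pow_ne_zero k hk')]
    _ ≤ ((n : ℝ) / k) ^ k * Real.exp k := by
        gcongr; exact Real.pow_div_factorial_le_exp _ (Nat.cast_nonneg k) k
    _ = (Real.exp 1 * n / k) ^ k := by rw [← Real.exp_one_pow, ← mul_pow]; ring

theorem exists_sym_count_succ_eq {t m : ℕ} (k : Fin t → ℕ) (hk : ∑ i, k i ≤ m) :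
    ∃ s : Sym (Fin (t + 1)) m, ∀ i, s.1.count i.succ = k i := by
  let f : Fin (t + 1) →₀ ℕ := Finsupp.equivFunOnFinite.symm (Fin.cons (m - ∑ i, k i) k)
  refine ⟨⟨Finsupp.toMultiset f, ?_⟩, fun i => ?_⟩
  · rw [Finsupp.card_toMultiset, Finsupp.sum_fintype _ _ fun _ => rfl, Fin.sum_univ_succ]
    simp only [f, Finsupp.coe_equivFunOnFinite_symm, Fin.cons_zero, Fin.cons_succ, id]
    omega
  · simp [f]

theorem abs_sub_floor_mul_div_le {x : ℝ} (hx : 0 ≤ x) {m : ℕ} (hm : 0 < m) :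
    |x - ⌊x * m⌋₊ / m| ≤ 1 / m := by
  have hm' : (0 : ℝ) < m := Nat.cast_pos.2 hm
  have hlow : (⌊x * m⌋₊ : ℝ) ≤ x * m := Nat.floor_le (by positivity)
  have hup : x * m < ⌊x * m⌋₊ + 1 := Nat.lt_floor_add_one _
  have hfloor_le : (⌊x * m⌋₊ : ℝ) / m ≤ x := (div_le_iff₀ hm').2 hlow
  have hlt_floor : x < (⌊x * m⌋₊ : ℝ) / m + 1 / m := by
    rw [← add_div, lt_div_iff₀ hm']; exact hup
  rw [abs_le]
  constructor <;> linarith [one_div_nonneg.2 hm'.le]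

section Rounding

variable {E : Type*} [SeminormedAddCommGroup E] [NormedSpace ℝ E]

open Classical in
/-- A multiset `s` of size `m` on `Fin (t + 1)` puts the weight `s.count i.succ / m` on the `i`-th
point; the slot `0` absorbs the rest of the mass. -/
noncomputable def roundedCombinations (V : Finset E) (t m : ℕ) : Finset E :=
  ((univ : Finset (Sym (Fin (t + 1)) m)) ×ˢ Fintype.piFinset fun _ : Fin t => V).image
    fun sv => ∑ i, ((sv.1.1.count i.succ : ℝ) / m) • sv.2 i

theorem card_roundedCombinations_le (V : Finset E) (t m : ℕ) :
    #(roundedCombinations V t m) ≤ (t + m).choose t * #V ^ t := by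
  classical
  refine card_image_le.trans (le_of_eq ?_)
  rw [card_product, card_univ, Sym.card_sym_eq_choose, Fintype.card_piFinset, Fintype.card_fin,
    prod_const, card_univ, Fintype.card_fin, Nat.add_right_comm, Nat.add_sub_cancel,
    Nat.choose_symm_add]

theorem exists_mem_roundedCombinations_dist_le {V : Finset E}
    (hV : ∀ v ∈ V, v ∈ closedBall (0 : E) 1) {t m : ℕ} (hm : 0 < m) {q : E}
    (hq : q ∈ convk (V : Set E) t) :
    ∃ w ∈ roundedCombinations V t m, dist q w ≤ t / m := by
  classical
  obtain ⟨v, l, hv, hl0, hl1, rfl⟩ := hq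
  have hsum : ∑ i, ⌊l i * m⌋₊ ≤ m := by
    have : (∑ i, (⌊l i * m⌋₊ : ℝ)) ≤ ∑ i, l i * m :=
      sum_le_sum fun i _ => Nat.floor_le (by have := hl0 i; positivity)
    rw [← sum_mul, hl1, one_mul] at this
    exact_mod_cast this
  obtain ⟨s, hs⟩ := exists_sym_count_succ_eq _ hsum
  have hsv : (s, v) ∈ (univ : Finset (Sym (Fin (t + 1)) m)) ×ˢ Fintype.piFinset fun _ => V :=
    mem_product.2 ⟨mem_univ s, Fintype.mem_piFinset.2 fun i => mem_coe.1 (hv i)⟩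
  refine ⟨∑ i, ((⌊l i * m⌋₊ : ℝ) / m) • v i, mem_image.2 ⟨(s, v), hsv, by simp only [hs]⟩, ?_⟩
  simp only [dist_eq_norm, ← sum_sub_distrib, ← sub_smul]
  calc ‖∑ i, (l i - ⌊l i * m⌋₊ / m) • v i‖
      ≤ ∑ i, ‖(l i - ⌊l i * m⌋₊ / m) • v i‖ := norm_sum_le _ _
    _ ≤ ∑ _i : Fin t, 1 / (m : ℝ) := sum_le_sum fun i _ => by
        rw [norm_smul, Real.norm_eq_abs, ← mul_one (1 / (m : ℝ))]
        exact mul_le_mul (abs_sub_floor_mul_div_le (hl0 i) hm)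
          (mem_closedBall_zero_iff.1 (hV _ (hv i))) (norm_nonneg _) (by positivity)
    _ = t / m := by simp [div_eq_mul_inv]

end Rounding

theorem exp_one_mul_add_ceil_div_le {t : ℕ} (ht : 1 ≤ t) {ε : ℝ} (hε : 0 < ε) (hε1 : ε ≤ 1) :
    Real.exp 1 * ((t : ℝ) + ⌈2 * t / ε⌉₊) / t ≤ Real.exp 3 / ε := by
  have ht' : (1 : ℝ) ≤ t := Nat.one_le_cast.2 ht
  have hceil : (⌈2 * t / ε⌉₊ : ℝ) < 2 * t / ε + 1 := Nat.ceil_lt_add_one (by positivity)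
  have hratio : ((t : ℝ) + ⌈2 * t / ε⌉₊) / t ≤ 4 / ε := by
    rw [div_le_div_iff₀ (by positivity) hε]
    have hcancel : 2 * t / ε * ε = 2 * t := div_mul_cancel₀ _ hε.ne'
    nlinarith [mul_lt_mul_of_pos_right hceil hε]
  -- `e³ = e · e² ≥ 4e` because `e ≥ 2`.
  have hexp : 4 * Real.exp 1 ≤ Real.exp 3 := by
    have h2 : 2 ≤ Real.exp 1 := by linarith [Real.add_one_le_exp 1]
    rw [show (3 : ℝ) = 1 + 1 + 1 by norm_num, Real.exp_add, Real.exp_add]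
    nlinarith
  calc Real.exp 1 * ((t : ℝ) + ⌈2 * t / ε⌉₊) / t
      = Real.exp 1 * (((t : ℝ) + ⌈2 * t / ε⌉₊) / t) := mul_div_assoc _ _ _
    _ ≤ Real.exp 1 * (4 / ε) := by gcongr
    _ ≤ Real.exp 3 / ε := by rw [mul_div_assoc', div_le_div_iff_of_pos_right hε]; linarith

/-- If `V ⊆ ℝ^d` is a set of `n` points in the closed unit ball and every point of
`P = conv(V)` lies within `ε/2` of `conv_t(V)`, then `P` admits an `ε`-cover of
cardinality at most `(e³·n/ε)^t` — hence `log N(P, ε) ≤ t(3 + log n + log(1/ε))`. -/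
theorem stmt3 {d : ℕ} (V : Finset (EuclideanSpace ℝ (Fin d))) (n : ℕ) (hn : V.card = n)
    (hV : ∀ v ∈ V, v ∈ closedBall (0 : EuclideanSpace ℝ (Fin d)) 1)
    (t : ℕ) (ht : 1 ≤ t) (ε : ℝ) (hε : 0 < ε) (hε1 : ε ≤ 1)
    (hcomp : ∀ p ∈ convexHull ℝ (V : Set (EuclideanSpace ℝ (Fin d))),
      ∃ q ∈ convk (V : Set (EuclideanSpace ℝ (Fin d))) t, dist p q ≤ ε / 2) :
    ∃ W : Finset (EuclideanSpace ℝ (Fin d)), (W.card : ℝ) ≤ (Real.exp 3 * n / ε) ^ t ∧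
      ∀ p ∈ convexHull ℝ (V : Set (EuclideanSpace ℝ (Fin d))), ∃ w ∈ W, dist p w ≤ ε := by
  set m := ⌈2 * (t : ℝ) / ε⌉₊
  have hm_ge : 2 * (t : ℝ) / ε ≤ m := Nat.le_ceil _
  have hm : 0 < m := Nat.cast_pos.1 (lt_of_lt_of_le (by positivity) hm_ge)
  have hstep : (t : ℝ) / m ≤ ε / 2 := by
    rw [div_le_iff₀' hε] at hm_ge
    rw [div_le_iff₀ (Nat.cast_pos.2 hm)]
    linarith
  refine ⟨roundedCombinations V t m, ?_, fun p hp => ?_⟩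
  · calc (#(roundedCombinations V t m) : ℝ) ≤ (t + m).choose t * (n : ℝ) ^ t := by
          exact_mod_cast hn ▸ card_roundedCombinations_le V t m
      _ ≤ (Real.exp 1 * ((t : ℝ) + m) / t) ^ t * (n : ℝ) ^ t := by
          gcongr; exact_mod_cast Nat.choose_le_exp_mul_div_pow (t + m) t
      _ ≤ (Real.exp 3 / ε) ^ t * (n : ℝ) ^ t := by
          gcongr ?_ ^ _ * _; exact exp_one_mul_add_ceil_div_le ht hε hε1
      _ = (Real.exp 3 * n / ε) ^ t := by rw [← mul_pow, div_mul_eq_mul_div]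
  · obtain ⟨q, hq, hpq⟩ := hcomp p hp
    obtain ⟨w, hw, hqw⟩ := exists_mem_roundedCombinations_dist_le hV hm hq
    exact ⟨w, hw, by linarith [dist_triangle p q w]⟩
end

section
/- Let V ⊆ ℝ^d be a finite set of n points contained in the closed unit Euclidean ball, let P = conv(V), let t ≥ 1 be an integer, and let 0 < ε ≤ 1. Suppose every point of P lies within Euclidean distance ε/2 of conv_t(V). Then t·(3 + log n + log(1/ε)) ≥ log varv(P) + d·log(1/ε), where varv(P) = vol_d(P)·Γ(1 + d/2)/π^{d/2} is the ratio of the Lebesgue volume of P to the volume of the unit Euclidean ball. Equivalently, t ≥ d·(log(varv(P)^{1/d}) + log(1/ε)) / (3 + log n + log(1/ε)). -/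
/-!
Every point of `P` is within `ε / 2` of a `t`-sparse combination of `V`; rounding its weights
down to multiples of `1 / m`, with `m = t ⌈2 / ε⌉`, moves it by at most `t / m ≤ ε / 2`. The
rounded combinations form a net of at most `n ^ t · C(t + m, t) ≤ (e³ n / ε) ^ t` points, so
`P` is covered by that many balls of radius `ε`, and comparing volumes gives
`varv P ≤ (e³ n / ε) ^ t · ε ^ d`.
-/

open Metric

/-- `varv P` is the ratio of the Lebesgue volume of `P ⊆ ℝ^d` to the volume of the unit
Euclidean ball, i.e. `vol_d(P)·Γ(1 + d/2)/π^{d/2}`. -/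
noncomputable def varv {d : ℕ} (A : Set (EuclideanSpace ℝ (Fin d))) : ℝ :=
  (MeasureTheory.volume A).toReal * Real.Gamma (1 + (d : ℝ) / 2) / Real.pi ^ ((d : ℝ) / 2)

open Finset MeasureTheory

lemma EuclideanSpace.volume_closedBall_fin_zero (x : EuclideanSpace ℝ (Fin 0)) {r : ℝ}
    (hr : 0 ≤ r) :
    volume (closedBall x r) = 1 := by
  have : closedBall x r = Set.univ := by
    ext y
    simp [Subsingleton.elim y x, hr]
  rw [this, ← (PiLp.volume_preserving_toLp (Fin 0)).measure_preimage
    MeasurableSet.univ.nullMeasurableSet]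
  simp [volume_pi]

lemma Real.sqrt_pi_pow_eq_rpow (d : ℕ) : √Real.pi ^ d = Real.pi ^ ((d : ℝ) / 2) := by
  rw [Real.sqrt_eq_rpow, ← Real.rpow_natCast, ← Real.rpow_mul Real.pi_pos.le]
  ring_nf

lemma varv_closedBall {d : ℕ} (x : EuclideanSpace ℝ (Fin d)) {r : ℝ} (hr : 0 ≤ r) :
    varv (closedBall x r) = r ^ d := by
  rcases Nat.eq_zero_or_pos d with rfl | hd
  · simp [varv, EuclideanSpace.volume_closedBall_fin_zero x hr]
  have : Nonempty (Fin d) := ⟨⟨0, hd⟩⟩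
  have hΓ : 0 < Real.Gamma (d / 2 + 1) := Real.Gamma_pos_of_pos (by positivity)
  have hπ : 0 < Real.pi ^ ((d : ℝ) / 2) := by positivity
  rw [varv, EuclideanSpace.volume_closedBall, Fintype.card_fin, ← ENNReal.ofReal_pow hr,
    ← ENNReal.ofReal_mul (by positivity), ENNReal.toReal_ofReal (by positivity),
    Real.sqrt_pi_pow_eq_rpow, add_comm (1 : ℝ)]
  field_simp

lemma varv_le_card_mul_pow {d : ℕ} {P : Set (EuclideanSpace ℝ (Fin d))}
    {S : Finset (EuclideanSpace ℝ (Fin d))} {r : ℝ} (hr : 0 ≤ r)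
    (hP : P ⊆ ⋃ q ∈ S, closedBall q r) : varv P ≤ #S * r ^ d := by
  have hfin : ∀ q ∈ S, volume (closedBall q r) ≠ ⊤ := fun _ _ => measure_closedBall_lt_top.ne
  have hvol : (volume P).toReal ≤ ∑ q ∈ S, (volume (closedBall q r)).toReal := by
    rw [← ENNReal.toReal_sum hfin]
    exact ENNReal.toReal_mono (ENNReal.sum_ne_top.mpr hfin)
      ((measure_mono hP).trans (measure_biUnion_finset_le _ _))
  have hc : 0 ≤ Real.Gamma (1 + (d : ℝ) / 2) / Real.pi ^ ((d : ℝ) / 2) :=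
    div_nonneg (Real.Gamma_pos_of_pos (by positivity)).le (by positivity)
  calc varv P ≤ ∑ q ∈ S, varv (closedBall q r) := by
        simp only [varv, mul_div_assoc, ← Finset.sum_mul]
        exact mul_le_mul_of_nonneg_right hvol hc
    _ = #S * r ^ d := by simp [varv_closedBall _ hr]

lemma exists_nat_approx_of_sum_le_one {ι : Type*} [Fintype ι] {l : ι → ℝ}
    (hl0 : ∀ i, 0 ≤ l i) (hl1 : ∑ i, l i ≤ 1) {m : ℕ} (hm : 0 < m) :
    ∃ k : ι → ℕ, ∑ i, k i ≤ m ∧ ∑ i, |l i - k i / m| ≤ Fintype.card ι / m := by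
  have hmR : (0 : ℝ) < m := by exact_mod_cast hm
  refine ⟨fun i => ⌊m * l i⌋₊, ?_, ?_⟩
  · have : ((∑ i, ⌊m * l i⌋₊ : ℕ) : ℝ) ≤ m := by
      push_cast
      calc ∑ i, (⌊m * l i⌋₊ : ℝ) ≤ ∑ i, m * l i :=
            sum_le_sum fun i _ => Nat.floor_le (by have := hl0 i; positivity)
        _ ≤ m := by rw [← mul_sum]; nlinarith
    exact_mod_cast this
  · calc ∑ i, |l i - ⌊m * l i⌋₊ / m| ≤ ∑ _i : ι, 1 / (m : ℝ) := by
          refine sum_le_sum fun i _ => ?_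
          have h1 := Nat.floor_le (by have := hl0 i; positivity : 0 ≤ (m : ℝ) * l i)
          have h2 := Nat.lt_floor_add_one ((m : ℝ) * l i)
          have h : l i - ⌊m * l i⌋₊ / m = (m * l i - ⌊m * l i⌋₊) / m := by field_simp
          rw [h, abs_div, abs_of_nonneg (by linarith), Nat.abs_cast]
          exact div_le_div_of_nonneg_right (by linarith) hmR.le
      _ = Fintype.card ι / m := by simp [div_eq_mul_inv]

lemma Nat.choose_mul_le_exp_mul_pow (t a : ℕ) :
    ((t * a).choose t : ℝ) ≤ (Real.exp 1 * a) ^ t := by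
  calc ((t * a).choose t : ℝ) ≤ ((t * a : ℕ) : ℝ) ^ t / t.factorial :=
        Nat.choose_le_pow_div _ _
    _ = a ^ t * ((t : ℝ) ^ t / t.factorial) := by push_cast; ring
    _ ≤ a ^ t * Real.exp t := by
        gcongr
        exact Real.pow_div_factorial_le_exp _ (by positivity) _
    _ = (Real.exp 1 * a) ^ t := by rw [mul_pow, Real.exp_one_pow, mul_comm]

section SparseNet

variable {E : Type*} [SeminormedAddCommGroup E] [NormedSpace ℝ E]

/-- Combinations of `t` points of `V` whose weights are multiples of `1 / m` summing to at most
one; the coordinate `none` of the weight vector records the missing mass. -/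
noncomputable def sparseNet (V : Finset E) (t m : ℕ) : Finset E :=
  open Classical in
  ((Fintype.piFinset fun _ : Fin t => V) ×ˢ
      (univ : Finset (Option (Fin t))).finsuppAntidiag m).image
    fun p => ∑ i, ((p.2 (some i) : ℝ) / m) • p.1 i

lemma card_sparseNet_le (V : Finset E) (t m : ℕ) :
    #(sparseNet V t m) ≤ #V ^ t * (t + m).choose t := by
  classical
  unfold sparseNet
  refine card_image_le.trans (card_product _ _).le |>.trans (le_of_eq ?_)
  rw [Fintype.card_piFinset, prod_const, card_univ, Fintype.card_fin,
    card_finsuppAntidiag_nat_eq_choose, card_univ, Fintype.card_option, Fintype.card_fin,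
    Nat.add_right_comm, Nat.add_sub_cancel, Nat.choose_symm_add]

lemma convk_subset_biUnion_sparseNet {V : Finset E} (hV : ∀ v ∈ V, v ∈ closedBall (0 : E) 1)
    (t : ℕ) {m : ℕ} (hm : 0 < m) :
    convk (V : Set E) t ⊆ ⋃ q ∈ sparseNet V t m, closedBall q (t / m) := by
  classical
  rintro x ⟨v, l, hvV, hl0, hl1, rfl⟩
  obtain ⟨k, hkm, hk⟩ := exists_nat_approx_of_sum_le_one hl0 hl1.le hm
  let w : Option (Fin t) →₀ ℕ :=
    Finsupp.equivFunOnFinite.symm fun o => o.elim (m - ∑ i, k i) k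
  have hw : w ∈ (univ : Finset (Option (Fin t))).finsuppAntidiag m := by
    simp [mem_finsuppAntidiag, w, Fintype.sum_option, Nat.sub_add_cancel hkm]
  refine Set.mem_biUnion (mem_image_of_mem _ (a := (v, w)) (mem_product.mpr
    ⟨Fintype.mem_piFinset.mpr hvV, hw⟩)) (mem_closedBall.mpr ?_)
  have hv1 : ∀ i, ‖v i‖ ≤ 1 := fun i => by simpa using hV _ (hvV i)
  calc dist (∑ i, l i • v i) (∑ i, ((w (some i) : ℝ) / m) • v i)
      = ‖∑ i, (l i - k i / m) • v i‖ := by simp [dist_eq_norm, w, sub_smul]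
    _ ≤ ∑ i, |l i - k i / m| := by
        refine (norm_sum_le _ _).trans (sum_le_sum fun i _ => ?_)
        rw [norm_smul, Real.norm_eq_abs]
        exact mul_le_of_le_one_right (abs_nonneg _) (hv1 i)
    _ ≤ t / m := by simpa using hk

end SparseNet

lemma pow_mul_exp_one_mul_succ_pow_le_exp {n t M : ℕ} (ht : 1 ≤ t) {ε : ℝ} (hε : 0 < ε)
    (hε1 : ε ≤ 1) (hM : (M : ℝ) ≤ 2 / ε + 1) :
    (n : ℝ) ^ t * (Real.exp 1 * (M + 1)) ^ t ≤
      Real.exp (t * (3 + Real.log n + Real.log (1 / ε))) := by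
  rcases Nat.eq_zero_or_pos n with rfl | hn
  · simp [zero_pow (by omega : t ≠ 0), Real.exp_nonneg]
  have hnR : (0 : ℝ) < n := by exact_mod_cast hn
  have he : (4 : ℝ) ≤ Real.exp 1 ^ 2 := by nlinarith [Real.add_one_le_exp (1 : ℝ)]
  have hMε : (M + 1 : ℝ) ≤ 4 / ε := by
    have : (2 : ℝ) ≤ 2 / ε := by rw [le_div_iff₀ hε]; linarith
    linarith [show (2 : ℝ) / ε + 2 / ε = 4 / ε by ring]
  rw [Real.exp_nat_mul, Real.exp_add, Real.exp_add, Real.exp_log hnR,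
    Real.exp_log (by positivity), ← mul_pow]
  refine pow_le_pow_left₀ (by positivity) ?_ t
  calc n * (Real.exp 1 * (M + 1)) ≤ n * (Real.exp 1 * (4 / ε)) := by gcongr
    _ = n * Real.exp 1 * 4 * (1 / ε) := by ring
    _ ≤ n * Real.exp 1 * Real.exp 1 ^ 2 * (1 / ε) := by gcongr
    _ = Real.exp 3 * n * (1 / ε) := by
        rw [show Real.exp 3 = Real.exp 1 ^ 3 by rw [Real.exp_one_pow]; norm_num]; ring

/-- The inequality `t (3 + log n + log (1 / ε)) ≥ log varv P + d log (1 / ε)` in exponentiated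
form, which remains meaningful when `varv P = 0`. -/
theorem stmt4 {d : ℕ} (V : Finset (EuclideanSpace ℝ (Fin d))) (n : ℕ) (hn : V.card = n)
    (hV : ∀ v ∈ V, v ∈ closedBall (0 : EuclideanSpace ℝ (Fin d)) 1)
    (t : ℕ) (ht : 1 ≤ t) (ε : ℝ) (hε : 0 < ε) (hε1 : ε ≤ 1)
    (hcomp : ∀ p ∈ convexHull ℝ (V : Set (EuclideanSpace ℝ (Fin d))),
      ∃ q ∈ convk (V : Set (EuclideanSpace ℝ (Fin d))) t, dist p q ≤ ε / 2) :
    varv (convexHull ℝ (V : Set (EuclideanSpace ℝ (Fin d)))) * (1 / ε) ^ d ≤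
      Real.exp ((t : ℝ) * (3 + Real.log n + Real.log (1 / ε))) := by
  set M := ⌈2 / ε⌉₊
  have hM : (2 / ε : ℝ) ≤ M := Nat.le_ceil _
  have hm : 0 < t * M := Nat.mul_pos ht (Nat.ceil_pos.mpr (by positivity))
  have hcover : convexHull ℝ (V : Set (EuclideanSpace ℝ (Fin d))) ⊆
      ⋃ q ∈ sparseNet V t (t * M), closedBall q ε := by
    intro p hp
    obtain ⟨q, hq, hpq⟩ := hcomp p hp
    obtain ⟨s, hs, hqs⟩ := Set.mem_iUnion₂.mp (convk_subset_biUnion_sparseNet hV t hm hq)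
    have hround : (t : ℝ) / (t * M : ℕ) ≤ ε / 2 := by
      rw [Nat.cast_mul, div_mul_cancel_left₀ (by positivity),
        inv_le_comm₀ (by positivity) (by positivity)]
      simpa using hM
    refine Set.mem_biUnion hs (mem_closedBall.mpr ?_)
    linarith [dist_triangle p q s, mem_closedBall.mp hqs]
  calc _ ≤ #(sparseNet V t (t * M)) * ε ^ d * (1 / ε) ^ d := by
        gcongr
        exact varv_le_card_mul_pow hε.le hcover
    _ = #(sparseNet V t (t * M)) := by
        rw [mul_assoc, ← mul_pow, mul_one_div_cancel hε.ne', one_pow, mul_one]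
    _ ≤ (n : ℝ) ^ t * (t * (M + 1)).choose t := by
        rw [← hn, show t * (M + 1) = t + t * M by ring]
        exact_mod_cast card_sparseNet_le V t (t * M)
    _ ≤ (n : ℝ) ^ t * (Real.exp 1 * (M + 1 : ℕ)) ^ t := by
        gcongr
        exact Nat.choose_mul_le_exp_mul_pow t (M + 1)
    _ ≤ _ := by
        push_cast
        exact pow_mul_exp_one_mul_succ_pow_le_exp ht hε hε1
          (Nat.ceil_lt_add_one (by positivity)).le
end

section
/- Let d ≥ 1, let B₁(d) = {x ∈ ℝ^d : Σ_{i=1}^d |x_i| ≤ 1} be the unit ℓ¹ ball, and let V = {±e_1, …, ±e_d} be its 2d vertices (signed standard basis vectors). Let δ > 0 satisfy 4δ ≤ √d, and let k ≥ 1 be an integer. If every point of B₁(d) lies within Euclidean distance 2δ/√d of conv_k(V), then k ≥ d·log(1/(4δ)) / (3 + (3/2)·log d + log(1/(2δ))). -/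
/-!
Only the centre `u = (1/d, …, 1/d)` of the `ℓ¹` ball is needed. A point of `conv_k(V)` is
supported on at most `k` coordinates, so its squared distance to `u` is at least `(d - k)/d²`;
comparing with `(2δ/√d)² = 4δ²/d` gives `k ≥ d(1 - 4δ²)`. For `δ < 1/4` this dominates
the logarithmic bound, since `4δ² log(1/(4δ)) ≤ δ`; for `δ ≥ 1/4` the bound is nonpositive.
-/

open Metric

open Finset

theorem exists_card_le_of_mem_convk {ι : Type*} {T : Set (EuclideanSpace ℝ ι)}
    (hT : ∀ t ∈ T, ∃ i, ∀ j ≠ i, t j = 0) {k : ℕ} {x : EuclideanSpace ℝ ι}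
    (hx : x ∈ convk T k) : ∃ S : Finset ι, #S ≤ k ∧ ∀ j ∉ S, x j = 0 := by
  classical
  obtain ⟨t, l, ht, -, -, rfl⟩ := hx
  choose c hc using fun i => hT (t i) (ht i)
  refine ⟨univ.image c, card_image_le.trans (by simp), fun j hj => ?_⟩
  have hne : ∀ i, j ≠ c i := fun i h => hj (h ▸ mem_image_of_mem c (mem_univ i))
  simp [WithLp.ofLp_sum, hc _ _ (hne _)]

theorem sum_compl_sq_le_dist_sq {ι : Type*} [Fintype ι] [DecidableEq ι] (S : Finset ι)
    {x : EuclideanSpace ℝ ι} (hx : ∀ j ∉ S, x j = 0) (y : EuclideanSpace ℝ ι) :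
    ∑ j ∈ Sᶜ, y j ^ 2 ≤ dist y x ^ 2 := by
  rw [EuclideanSpace.dist_sq_eq]
  calc ∑ j ∈ Sᶜ, y j ^ 2 = ∑ j ∈ Sᶜ, dist (y j) (x j) ^ 2 := by
        refine sum_congr rfl fun j hj => ?_
        rw [hx j (mem_compl.1 hj), Real.dist_eq, sub_zero, sq_abs]
    _ ≤ ∑ j, dist (y j) (x j) ^ 2 :=
        sum_le_sum_of_subset_of_nonneg (subset_univ _) fun _ _ _ => sq_nonneg _

theorem card_sub_mul_sq_le_dist_const_sq {ι : Type*} [Fintype ι]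
    {T : Set (EuclideanSpace ℝ ι)} (hT : ∀ t ∈ T, ∃ i, ∀ j ≠ i, t j = 0) {k : ℕ}
    {x : EuclideanSpace ℝ ι} (hx : x ∈ convk T k) (c : ℝ) :
    (Fintype.card ι - k : ℝ) * c ^ 2 ≤ dist (WithLp.toLp 2 fun _ => c) x ^ 2 := by
  classical
  obtain ⟨S, hSk, hS⟩ := exists_card_le_of_mem_convk hT hx
  have hcard : (Fintype.card ι - k : ℝ) ≤ #Sᶜ := by
    have hsplit : (Fintype.card ι : ℝ) = #S + #Sᶜ := by
      exact_mod_cast (card_add_card_compl S).symm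
    have hSk' : (#S : ℝ) ≤ k := by exact_mod_cast hSk
    linarith
  calc (Fintype.card ι - k : ℝ) * c ^ 2 ≤ #Sᶜ * c ^ 2 := by gcongr
    _ = ∑ j ∈ Sᶜ, (WithLp.toLp 2 fun _ => c : EuclideanSpace ℝ ι) j ^ 2 := by simp
    _ ≤ _ := sum_compl_sq_le_dist_sq S hS _

theorem exists_apply_eq_zero_of_eq_single_or_neg {ι : Type*} [DecidableEq ι]
    {t : EuclideanSpace ℝ ι}
    (ht : ∃ i, t = EuclideanSpace.single i (1 : ℝ) ∨ t = -EuclideanSpace.single i (1 : ℝ)) :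
    ∃ i, ∀ j ≠ i, t j = 0 := by
  obtain ⟨i, rfl | rfl⟩ := ht <;> exact ⟨i, fun j hj => by simp [hj]⟩

open Real

theorem three_add_log_pos {d δ : ℝ} (hd : 1 ≤ d) (hδ : 0 < δ) (hδd : 4 * δ ≤ √d) :
    0 < 3 + (3 / 2) * log d + log (1 / (2 * δ)) := by
  have hsd : 0 < √d := by positivity
  have hle : log (2 / √d) ≤ log (1 / (2 * δ)) := by
    apply log_le_log (by positivity)
    rw [div_le_div_iff₀ hsd (by positivity)]
    linarith
  rw [log_div two_ne_zero hsd.ne', log_sqrt (by linarith)] at hle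
  have := log_nonneg hd
  have := log_pos one_lt_two
  linarith

theorem log_inv_four_mul_le {d δ : ℝ} (hd : 1 ≤ d) (hδ : 0 < δ) (hδ4 : δ < 1 / 4) :
    log (1 / (4 * δ)) ≤ (1 - 4 * δ ^ 2) * (3 + (3 / 2) * log d + log (1 / (2 * δ))) := by
  set L := log (1 / (4 * δ))
  have hL : log (1 / (2 * δ)) = log 2 + L := by
    rw [← log_mul two_ne_zero (by positivity)]
    congr 1
    field_simp
    norm_num
  have hLpos : 0 < L := log_pos (by rw [one_lt_div (by positivity)]; linarith)
  have hsmall : 4 * δ ^ 2 * L ≤ δ := by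
    have := mul_le_mul_of_nonneg_left (log_le_sub_one_of_pos (x := 1 / (4 * δ)) (by positivity))
      (by positivity : (0 : ℝ) ≤ 4 * δ ^ 2)
    have h : 4 * δ ^ 2 * (1 / (4 * δ)) = δ := by field_simp
    nlinarith
  have hε : 0 ≤ 1 - 4 * δ ^ 2 := by nlinarith
  rw [hL]
  nlinarith [mul_nonneg hε (log_nonneg hd), mul_nonneg hε (log_pos one_lt_two).le]

theorem mul_log_div_le_of_mul_one_sub_le {d δ k : ℝ} (hd : 1 ≤ d) (hδ : 0 < δ)
    (hδd : 4 * δ ≤ √d) (hk0 : 0 ≤ k) (hk : d * (1 - 4 * δ ^ 2) ≤ k) :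
    d * log (1 / (4 * δ)) / (3 + (3 / 2) * log d + log (1 / (2 * δ))) ≤ k := by
  have hD := three_add_log_pos hd hδ hδd
  rcases lt_or_ge δ (1 / 4) with hδ4 | hδ4
  · rw [div_le_iff₀ hD]
    calc d * log (1 / (4 * δ))
        ≤ d * ((1 - 4 * δ ^ 2) * (3 + (3 / 2) * log d + log (1 / (2 * δ)))) := by
          gcongr
          exact log_inv_four_mul_le hd hδ hδ4
      _ ≤ k * (3 + (3 / 2) * log d + log (1 / (2 * δ))) := by
          rw [← mul_assoc]; gcongr
  · have hL : log (1 / (4 * δ)) ≤ 0 :=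
      log_nonpos (by positivity) (by rw [div_le_one (by positivity)]; linarith)
    exact (div_nonpos_of_nonpos_of_nonneg (by nlinarith) hD.le).trans hk0

theorem stmt6_general (d : ℕ) (δ : ℝ) (hδ : 0 < δ) (hδd : 4 * δ ≤ Real.sqrt d)
    (k : ℕ)
    (hcomp : ∀ x : EuclideanSpace ℝ (Fin d), (∑ i, |x i|) ≤ 1 →
      ∃ q ∈ convk {v : EuclideanSpace ℝ (Fin d) |
          ∃ i : Fin d, v = EuclideanSpace.single i (1 : ℝ) ∨
            v = -EuclideanSpace.single i (1 : ℝ)} k,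
        dist x q ≤ 2 * δ / Real.sqrt d) :
    (d : ℝ) * Real.log (1 / (4 * δ)) /
        (3 + (3 / 2) * Real.log d + Real.log (1 / (2 * δ))) ≤ (k : ℝ) := by
  have hd : (0 : ℝ) < d := sqrt_pos.1 (by linarith)
  obtain ⟨q, hq, hdist⟩ := hcomp (WithLp.toLp 2 fun _ => 1 / d) (by simp [hd.ne'])
  have hgap := card_sub_mul_sq_le_dist_const_sq
    (fun _ ht => exists_apply_eq_zero_of_eq_single_or_neg ht) hq (1 / d)
  have hdist_sq : dist (WithLp.toLp 2 fun _ => 1 / (d : ℝ)) q ^ 2 ≤ 4 * δ ^ 2 / d := by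
    calc _ ≤ (2 * δ / √d) ^ 2 := by gcongr
      _ = 4 * δ ^ 2 / d := by rw [div_pow, sq_sqrt hd.le]; ring
  rw [Fintype.card_fin] at hgap
  have hk : d * (1 - 4 * δ ^ 2) ≤ k := by
    have := hgap.trans hdist_sq
    field_simp at this
    linarith
  exact mul_log_div_le_of_mul_one_sub_le (by exact_mod_cast hd) hδ hδd k.cast_nonneg hk

/-- The `ℓ¹`-ball example: if every point of the unit `ℓ¹` ball in `ℝ^d` lies within
Euclidean distance `2δ/√d` of `conv_k` of its `2d` vertices `{±e_i}`, where `0 < δ` and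
`4δ ≤ √d`, then `k ≥ d·log(1/(4δ)) / (3 + (3/2)·log d + log(1/(2δ)))`. -/
theorem stmt6 (d : ℕ) (hd : 1 ≤ d) (δ : ℝ) (hδ : 0 < δ) (hδd : 4 * δ ≤ Real.sqrt d)
    (k : ℕ) (hk : 1 ≤ k)
    (hcomp : ∀ x : EuclideanSpace ℝ (Fin d), (∑ i, |x i|) ≤ 1 →
      ∃ q ∈ convk {v : EuclideanSpace ℝ (Fin d) |
          ∃ i : Fin d, v = EuclideanSpace.single i (1 : ℝ) ∨
            v = -EuclideanSpace.single i (1 : ℝ)} k,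
        dist x q ≤ 2 * δ / Real.sqrt d) :
    (d : ℝ) * Real.log (1 / (4 * δ)) /
        (3 + (3 / 2) * Real.log d + Real.log (1 / (2 * δ))) ≤ (k : ℝ) :=
  stmt6_general d δ hδ hδd k hcomp
end

section
/- For every integer d ≥ 6, the measure of the spherical cap of height 1/(2√d) satisfies μ_d(1/(2√d)) > 1/20. -/
/-!
Let `μ` be a rotation-invariant probability measure on the unit sphere of an `n`-dimensional
inner product space and `u` a unit vector. Summing `⟪x, b i⟫ ^ 2` over an orthonormal basis
gives `∫ ⟪x, u⟫ ^ 2 = 1 / n`. Comparing the directions `u`, `v` and `(u ± v) / √2` for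
orthonormal `u`, `v` gives `∫ ⟪x, u⟫ ^ 2 ⟪x, v⟫ ^ 2 = (∫ ⟪x, u⟫ ^ 4) / 3`, and summing
`‖x‖ ^ 4 = 1` over pairs of basis vectors then gives `∫ ⟪x, u⟫ ^ 4 = 3 / (n (n + 2))`.
So `Z = n ⟪x, u⟫ ^ 2` has mean `1` and second moment at most `3`, and integrating a quadratic
minorant of the indicator of `{Z ≥ 1/4}` shows that this event has probability at least
`160/729`. By the symmetry `x ↦ -x`, half of it lies in the cap `{⟪x, u⟫ ≥ 1 / (2 √n)}`,
and `80/729 > 1/20`.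
-/

open MeasureTheory
open scoped RealInnerProductSpace

theorem Continuous.integrable_of_ae_mem_compact {X F : Type*}
    [TopologicalSpace X] [T2Space X] [MeasurableSpace X] [OpensMeasurableSpace X]
    [NormedAddCommGroup F] {ν : Measure X} [IsFiniteMeasureOnCompacts ν] {K : Set X}
    (hK : IsCompact K) (hν : ∀ᵐ x ∂ν, x ∈ K) {f : X → F} (hf : Continuous f) :
    Integrable f ν := by
  rw [← Measure.restrict_eq_self_of_ae_mem hν]
  exact hf.continuousOn.integrableOn_compact hK

theorem integrable_of_ae_norm_eq_one {E : Type*} [NormedAddCommGroup E] [ProperSpace E]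
    [MeasurableSpace E] [OpensMeasurableSpace E] {μ : Measure E} [IsFiniteMeasureOnCompacts μ]
    (hsphere : ∀ᵐ x ∂μ, ‖x‖ = 1) {f : E → ℝ} (hf : Continuous f) : Integrable f μ :=
  hf.integrable_of_ae_mem_compact (isCompact_sphere 0 1) (by simpa using hsphere)

theorem le_measureReal_setOf_quarter_le {Ω : Type*} [MeasurableSpace Ω] {ν : Measure Ω}
    [IsProbabilityMeasure ν] {Z : Ω → ℝ} (hZ : Measurable Z)
    (hZ2 : Integrable (fun ω ↦ Z ω ^ 2) ν) (h1 : ∫ ω, Z ω ∂ν = 1)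
    (h2 : ∫ ω, Z ω ^ 2 ∂ν ≤ 3) : 160 / 729 ≤ ν.real {ω | 1 / 4 ≤ Z ω} := by
  have hZ1 : Integrable Z ν := Integrable.of_integral_ne_zero (by rw [h1]; exact one_ne_zero)
  have hS : MeasurableSet {ω | 1 / 4 ≤ Z ω} := measurableSet_le measurable_const hZ
  -- `q z = (64/729) (z - 1/4) (7 - z)` peaks at `z = 29/8` with value `1` and is negative
  -- for `z < 1/4`, so `q ∘ Z` lies below the indicator of the event.
  let q : ℝ → ℝ := fun z ↦ -(64 / 729) * z ^ 2 + 64 / 729 * (29 / 4) * z - 64 / 729 * (7 / 4)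
  have hq : ∀ ω, q (Z ω) ≤ {ω | 1 / 4 ≤ Z ω}.indicator 1 ω := by
    intro ω
    simp only [q]
    by_cases hω : ω ∈ {ω | 1 / 4 ≤ Z ω}
    · rw [Set.indicator_of_mem hω, Pi.one_apply]
      nlinarith [sq_nonneg (Z ω - 29 / 8)]
    · rw [Set.indicator_of_notMem hω]
      have : Z ω < 1 / 4 := not_le.mp hω
      nlinarith [mul_pos (sub_pos.2 this) (by linarith : (0 : ℝ) < 7 - Z ω)]
  have hqZ : Integrable (fun ω ↦ -(64 / 729) * Z ω ^ 2 + 64 / 729 * (29 / 4) * Z ω) ν :=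
    (hZ2.const_mul _).add (hZ1.const_mul _)
  calc 160 / 729 ≤ -(64 / 729) * ∫ ω, Z ω ^ 2 ∂ν + 64 / 729 * (29 / 4) * ∫ ω, Z ω ∂ν
        - 64 / 729 * (7 / 4) := by rw [h1]; linarith
    _ = ∫ ω, q (Z ω) ∂ν := by
      rw [integral_sub hqZ (integrable_const _), integral_add (hZ2.const_mul _) (hZ1.const_mul _),
        integral_const_mul, integral_const_mul, integral_const, probReal_univ, one_smul]
    _ ≤ ∫ ω, {ω | 1 / 4 ≤ Z ω}.indicator 1 ω ∂ν :=
      integral_mono (hqZ.sub (integrable_const _)) ((integrable_const 1).indicator hS) hq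
    _ = ν.real {ω | 1 / 4 ≤ Z ω} := integral_indicator_one hS

variable {E : Type*} [NormedAddCommGroup E] [InnerProductSpace ℝ E]

theorem OrthonormalBasis.sum_inner_sq {ι : Type*} [Fintype ι] (b : OrthonormalBasis ι ℝ E)
    (x : E) : ∑ i, ⟪x, b i⟫ ^ 2 = ‖x‖ ^ 2 := by
  rw [← real_inner_self_eq_norm_sq, ← b.sum_inner_mul_inner x x]
  simp_rw [sq, real_inner_comm x]

variable [MeasurableSpace E]

def IsRotationInvariant (μ : Measure E) : Prop :=
  ∀ O : E ≃ₗᵢ[ℝ] E, μ.map O = μ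

namespace IsRotationInvariant

variable {μ : Measure E}

theorem integral_comp [BorelSpace E] (hμ : IsRotationInvariant μ) {G : Type*}
    [NormedAddCommGroup G] [NormedSpace ℝ G] (O : E ≃ₗᵢ[ℝ] E) (f : E → G) :
    ∫ x, f (O x) ∂μ = ∫ x, f x ∂μ := by
  conv_rhs => rw [← hμ O]
  exact (O.toHomeomorph.measurableEmbedding.integral_map f).symm

theorem integral_comp_inner [BorelSpace E] (hμ : IsRotationInvariant μ) {G : Type*}
    [NormedAddCommGroup G] [NormedSpace ℝ G] (f : ℝ → G) {u v : E} (huv : ‖u‖ = ‖v‖) :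
    ∫ x, f ⟪x, u⟫ ∂μ = ∫ x, f ⟪x, v⟫ ∂μ := by
  let O := (ℝ ∙ (u - v))ᗮ.reflection
  have hOu : O u = v := Submodule.reflection_sub huv
  rw [← hμ.integral_comp O (fun x ↦ f ⟪x, v⟫)]
  congr with x
  rw [← hOu, LinearIsometryEquiv.inner_map_map]

theorem isNegInvariant (hμ : IsRotationInvariant μ) : μ.IsNegInvariant :=
  ⟨hμ (LinearIsometryEquiv.neg ℝ)⟩

variable [FiniteDimensional ℝ E] [BorelSpace E] [IsProbabilityMeasure μ]

theorem integral_inner_sq (hμ : IsRotationInvariant μ)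
    (hsphere : ∀ᵐ x ∂μ, ‖x‖ = 1) {u : E} (hu : ‖u‖ = 1) :
    ∫ x, ⟪x, u⟫ ^ 2 ∂μ = 1 / Module.finrank ℝ E := by
  let b := stdOrthonormalBasis ℝ E
  have hb : ∀ i, ∫ x, ⟪x, b i⟫ ^ 2 ∂μ = ∫ x, ⟪x, u⟫ ^ 2 ∂μ := fun i ↦
    hμ.integral_comp_inner (· ^ 2) (by rw [b.norm_eq_one, hu])
  have hsum : ∫ x, ∑ i, ⟪x, b i⟫ ^ 2 ∂μ = 1 := by
    rw [integral_congr_ae (g := fun _ ↦ 1)]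
    · simp
    filter_upwards [hsphere] with x hx
    rw [b.sum_inner_sq, hx, one_pow]
  rw [integral_finsetSum _ fun i _ ↦ integrable_of_ae_norm_eq_one hsphere (by fun_prop)] at hsum
  simp_rw [hb, Finset.sum_const, Finset.card_univ, Fintype.card_fin, nsmul_eq_mul] at hsum
  exact eq_one_div_of_mul_eq_one_right hsum

theorem integral_inner_sq_mul_inner_sq (hμ : IsRotationInvariant μ)
    (hsphere : ∀ᵐ x ∂μ, ‖x‖ = 1) {u v : E} (hu : ‖u‖ = 1) (hv : ‖v‖ = 1) (huv : ⟪u, v⟫ = 0) :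
    ∫ x, ⟪x, u⟫ ^ 2 * ⟪x, v⟫ ^ 2 ∂μ = (∫ x, ⟪x, u⟫ ^ 4 ∂μ) / 3 := by
  have hint {f : E → ℝ} (hf : Continuous f) : Integrable f μ :=
    integrable_of_ae_norm_eq_one hsphere hf
  have hsqrt2 : ∀ w : E, ‖w‖ = √2 → ∫ x, ⟪x, w⟫ ^ 4 ∂μ = 4 * ∫ x, ⟪x, u⟫ ^ 4 ∂μ := by
    intro w hw
    have h4 : (√2 : ℝ) ^ 4 = 4 := by
      rw [show (4 : ℕ) = 2 * 2 from rfl, pow_mul, Real.sq_sqrt zero_le_two]; norm_num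
    rw [hμ.integral_comp_inner (· ^ 4) (by rw [hw, norm_smul, hu, mul_one, Real.norm_of_nonneg
      (Real.sqrt_nonneg 2)] : ‖w‖ = ‖√2 • u‖), ← integral_const_mul]
    simp_rw [real_inner_smul_right, mul_pow, h4]
  have hnorm : ∀ s : ℝ, s ^ 2 = 1 → ‖u + s • v‖ = √2 := by
    intro s hs
    rw [← Real.sqrt_sq (norm_nonneg _), norm_add_sq_real, norm_smul, real_inner_smul_right, huv,
      hu, hv, mul_pow, Real.norm_eq_abs, sq_abs, hs]
    norm_num
  have hv4 : ∫ x, ⟪x, v⟫ ^ 4 ∂μ = ∫ x, ⟪x, u⟫ ^ 4 ∂μ :=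
    hμ.integral_comp_inner (· ^ 4) (hv.trans hu.symm)
  have hpar : ∫ x, (⟪x, u + (1 : ℝ) • v⟫ ^ 4 + ⟪x, u + (-1 : ℝ) • v⟫ ^ 4) ∂μ
      = ∫ x, (2 * ⟪x, u⟫ ^ 4 + 12 * (⟪x, u⟫ ^ 2 * ⟪x, v⟫ ^ 2) + 2 * ⟪x, v⟫ ^ 4) ∂μ := by
    congr with x
    simp only [inner_add_right, real_inner_smul_right]
    ring
  rw [integral_add (hint (by fun_prop)) (hint (by fun_prop)),
    hsqrt2 _ (hnorm 1 (by norm_num)), hsqrt2 _ (hnorm (-1) (by norm_num)),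
    integral_add (hint (by fun_prop)) (hint (by fun_prop)),
    integral_add (hint (by fun_prop)) (hint (by fun_prop)),
    integral_const_mul, integral_const_mul, integral_const_mul, hv4] at hpar
  linarith

theorem integral_inner_pow_four (hμ : IsRotationInvariant μ)
    (hsphere : ∀ᵐ x ∂μ, ‖x‖ = 1) {u : E} (hu : ‖u‖ = 1) :
    ∫ x, ⟪x, u⟫ ^ 4 ∂μ = 3 / (Module.finrank ℝ E * (Module.finrank ℝ E + 2)) := by
  set M := ∫ x, ⟪x, u⟫ ^ 4 ∂μ
  let b := stdOrthonormalBasis ℝ E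
  have hb : ∀ i, ∫ x, ⟪x, b i⟫ ^ 4 ∂μ = M := fun i ↦
    hμ.integral_comp_inner (· ^ 4) (by rw [b.norm_eq_one, hu])
  have hpair : ∀ i j,
      ∫ x, ⟪x, b i⟫ ^ 2 * ⟪x, b j⟫ ^ 2 ∂μ = M / 3 + if i = j then 2 * M / 3 else 0 := by
    intro i j
    split_ifs with hij
    · simp_rw [hij, ← pow_add, hb]
      ring
    · rw [hμ.integral_inner_sq_mul_inner_sq hsphere (b.norm_eq_one i)
        (b.norm_eq_one j) (b.orthonormal.2 hij), hb, add_zero]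
  have hsum : ∫ x, ∑ i, ∑ j, ⟪x, b i⟫ ^ 2 * ⟪x, b j⟫ ^ 2 ∂μ = 1 := by
    rw [integral_congr_ae (g := fun _ ↦ 1)]
    · simp
    filter_upwards [hsphere] with x hx
    rw [← Finset.sum_mul_sum, ← sq, b.sum_inner_sq, hx, one_pow, one_pow]
  have hint : ∀ i j, Integrable (fun x ↦ ⟪x, b i⟫ ^ 2 * ⟪x, b j⟫ ^ 2) μ := fun i j ↦
    integrable_of_ae_norm_eq_one hsphere (by fun_prop)
  rw [integral_finsetSum _ fun i _ ↦ integrable_finsetSum _ fun j _ ↦ hint i j] at hsum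
  simp only [integral_finsetSum _ fun j _ ↦ hint _ j, hpair, Finset.sum_add_distrib,
    Finset.sum_ite_eq, Finset.mem_univ, if_true, Finset.sum_const, Finset.card_univ,
    Fintype.card_fin, nsmul_eq_mul] at hsum
  have hn : 0 < Module.finrank ℝ E :=
    Module.finrank_pos_iff_exists_ne_zero.mpr ⟨u, by rintro rfl; simp at hu⟩
  rw [eq_div_iff (by positivity)]
  linear_combination 3 * hsum

theorem le_measureReal_cap (hμ : IsRotationInvariant μ)
    (hsphere : ∀ᵐ x ∂μ, ‖x‖ = 1) {u : E} (hu : ‖u‖ = 1) :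
    80 / 729 ≤ μ.real {x | 1 / (2 * √(Module.finrank ℝ E)) ≤ ⟪x, u⟫} := by
  set n : ℝ := (Module.finrank ℝ E : ℝ)
  have hn : 0 < n := Nat.cast_pos.mpr <|
    Module.finrank_pos_iff_exists_ne_zero.mpr ⟨u, by rintro rfl; simp at hu⟩
  set C := {x : E | 1 / (2 * √n) ≤ ⟪x, u⟫}
  have hZ1 : ∫ x, n * ⟪x, u⟫ ^ 2 ∂μ = 1 := by
    rw [integral_const_mul, hμ.integral_inner_sq hsphere hu]
    exact mul_one_div_cancel hn.ne'
  have hZ2 : ∫ x, (n * ⟪x, u⟫ ^ 2) ^ 2 ∂μ ≤ 3 := by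
    simp_rw [mul_pow, ← pow_mul]
    rw [integral_const_mul, hμ.integral_inner_pow_four hsphere hu,
      mul_div_assoc', div_le_iff₀ (by positivity)]
    nlinarith
  have hcover : {x | 1 / 4 ≤ n * ⟪x, u⟫ ^ 2} ⊆ C ∪ -C := by
    intro x hx
    have ht : (1 / (2 * √n)) ^ 2 ≤ ⟪x, u⟫ ^ 2 := by
      rw [div_pow, mul_pow, Real.sq_sqrt hn.le, div_le_iff₀ (by positivity)]
      linarith [hx.out]
    rcases le_abs'.mp ((le_abs_self _).trans (sq_le_sq.mp ht)) with h | h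
    · right
      simp only [C, Set.mem_neg, Set.mem_ofPred_eq, inner_neg_left]
      linarith
    · exact Or.inl h
  have hsymm : μ.real (-C) = μ.real C := by
    have := hμ.isNegInvariant
    simp only [measureReal_def, Measure.measure_neg]
  have hquarter := le_measureReal_setOf_quarter_le (by fun_prop)
    (integrable_of_ae_norm_eq_one hsphere (by fun_prop)) hZ1 hZ2
  linarith [measureReal_mono hcover (measure_ne_top μ _), measureReal_union_le (μ := μ) C (-C)]

end IsRotationInvariant

/-- For `d ≥ 6` the uniform (rotation-invariant) probability measure on the unit sphere
`S^{d-1} ⊆ ℝ^d` gives the spherical cap of height `1/(2√d)` measure greater than `1/20`. -/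
theorem stmt7 (d : ℕ) (hd : 6 ≤ d)
    (μ : Measure (EuclideanSpace ℝ (Fin d))) [IsProbabilityMeasure μ]
    (hsupp : μ {x : EuclideanSpace ℝ (Fin d) | ‖x‖ = 1}ᶜ = 0)
    (hrot : ∀ O : EuclideanSpace ℝ (Fin d) ≃ₗᵢ[ℝ] EuclideanSpace ℝ (Fin d),
      Measure.map (fun x => O x) μ = μ) :
    (1 / 20 : ENNReal) <
      μ {x : EuclideanSpace ℝ (Fin d) |
        1 / (2 * Real.sqrt d) ≤ ⟪x, EuclideanSpace.single (⟨0, by omega⟩ : Fin d) 1⟫} := by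
  have hcap := IsRotationInvariant.le_measureReal_cap hrot (ae_iff.mpr hsupp)
    (u := EuclideanSpace.single (⟨0, by omega⟩ : Fin d) 1) (by simp)
  rw [finrank_euclideanSpace, Fintype.card_fin] at hcap
  rw [← ofReal_measureReal, ← ENNReal.ofReal_one, ← ENNReal.ofReal_ofNat,
    ← ENNReal.ofReal_div_of_pos (by norm_num), ENNReal.ofReal_lt_ofReal_iff (by linarith)]
  linarith
end

section
/- Let d ≥ 1, let ε ∈ (0,1) and t > 0. Then the spherical cap measure satisfies μ_d(ε/(1+t)) ≥ P(Z ≥ ε·√d) − e^{−t²·d/2}, where Z is a standard real Gaussian random variable (so P(Z ≥ s) = 1 − Φ(s) with Φ the standard normal CDF). -/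
open MeasureTheory ProbabilityTheory Real
open scoped RealInnerProductSpace

/-!
Couple the rotation-invariant measure `μ` on the sphere with an independent standard Gaussian
vector `g` and look at the event `r ‖g‖ ≤ ⟪x, g⟫`. Conditioned on `g ≠ 0`, rotating `g / ‖g‖` to `e`
shows it has probability `μ {x | r ≤ ⟪x, e⟫}`; conditioned on `x` with `‖x‖ = 1`, rotating `x` to `e`
shows it has probability `γ {g | r ‖g‖ ≤ ⟪e, g⟫}`. So the cap measure is the Gaussian measure of a
cone. For `r = ε / (1 + t)` the cone contains the half-space `ε √d ≤ ⟪e, g⟫` outside the region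
`‖g‖ ≥ (1 + t) √d`, and the latter has Gaussian measure at most `e^{-t²d/2}` by a Chernoff bound,
since `E exp (λ ‖g‖²) = (1 - 2λ)^{-d/2}`.
-/

lemma integral_exp_mul_sq_gaussianReal {l : ℝ} (hl : l < 1 / 2) :
    ∫ x, exp (l * x ^ 2) ∂gaussianReal 0 1 = (√(1 - 2 * l))⁻¹ := by
  have h2l : 0 < 1 - 2 * l := by linarith
  have hpdf (x : ℝ) : gaussianPDFReal 0 1 x • exp (l * x ^ 2)
      = (√(2 * π))⁻¹ * exp (-(1 / 2 - l) * x ^ 2) := by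
    rw [gaussianPDFReal, smul_eq_mul, mul_assoc, ← exp_add]
    congr 3
    · simp
    · push_cast; ring
  simp_rw [integral_gaussianReal_eq_integral_smul one_ne_zero, hpdf, integral_const_mul,
    integral_gaussian]
  rw [show π / (1 / 2 - l) = 2 * π / (1 - 2 * l) by field_simp, sqrt_div' _ h2l.le]
  field_simp

section

variable {E : Type*} [NormedAddCommGroup E] [InnerProductSpace ℝ E]

lemma exists_linearIsometryEquiv_apply_eq {u v : E} (h : ‖u‖ = ‖v‖) :
    ∃ O : E ≃ₗᵢ[ℝ] E, O u = v :=
  ⟨_, Submodule.reflection_sub h⟩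

variable [MeasurableSpace E] [BorelSpace E]

lemma measure_preimage_linearIsometryEquiv {ν : Measure E}
    (hν : ∀ O : E ≃ₗᵢ[ℝ] E, ν.map O = ν) (O : E ≃ₗᵢ[ℝ] E) {s : Set E} (hs : MeasurableSet s) :
    ν (O ⁻¹' s) = ν s := by
  conv_rhs => rw [← hν O, Measure.map_apply O.continuous.measurable hs]

variable [FiniteDimensional ℝ E]

lemma integral_exp_mul_norm_sq_stdGaussian {l : ℝ} (hl : l < 1 / 2) :
    ∫ g, exp (l * ‖g‖ ^ 2) ∂stdGaussian E = (√(1 - 2 * l))⁻¹ ^ Module.finrank ℝ E := by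
  let b := stdOrthonormalBasis ℝ E
  have hnorm (x : Fin (Module.finrank ℝ E) → ℝ) :
      exp (l * ‖∑ i, x i • b i‖ ^ 2) = ∏ i, exp (l * x i ^ 2) := by
    have hsum : ∑ i, x i • b i = b.repr.symm (WithLp.toLp 2 x) := b.sum_repr_symm _
    rw [← exp_sum, ← Finset.mul_sum, hsum, b.repr.symm.norm_map, EuclideanSpace.real_norm_sq_eq]
  rw [stdGaussian_eq_map_pi_orthonormalBasis b,
    integral_map (Measurable.aemeasurable (by fun_prop)) (by fun_prop)]
  simp_rw [hnorm]
  rw [integral_fintype_prod_eq_pow (fun x => exp (l * x ^ 2)),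
    integral_exp_mul_sq_gaussianReal hl, Fintype.card_fin]

lemma integrable_exp_mul_norm_sq_stdGaussian {l : ℝ} (hl : l < 1 / 2) :
    Integrable (fun g => exp (l * ‖g‖ ^ 2)) (stdGaussian E) := by
  have h2l : 0 < 1 - 2 * l := by linarith
  refine Integrable.of_integral_ne_zero ?_
  rw [integral_exp_mul_norm_sq_stdGaussian hl]
  positivity

lemma stdGaussian_real_setOf_le_norm_le {t : ℝ} (ht : 0 < t) :
    (stdGaussian E).real {g | (1 + t) * √(Module.finrank ℝ E) ≤ ‖g‖}
      ≤ exp (-(t ^ 2 * Module.finrank ℝ E) / 2) := by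
  set n := Module.finrank ℝ E
  set l := t * (2 + t) / (2 * (1 + t) ^ 2) with hl_def
  have h1t : 0 < 1 + t := by linarith
  have hl0 : 0 ≤ l := by positivity
  have h2l : 1 - 2 * l = ((1 + t) ^ 2)⁻¹ := by rw [hl_def]; field_simp; ring
  have hl : l < 1 / 2 := by linarith [inv_pos.2 (pow_pos h1t 2)]
  have hset : {g : E | (1 + t) * √n ≤ ‖g‖} = {g | (1 + t) ^ 2 * n ≤ ‖g‖ ^ 2} := by
    have hsq : (1 + t) ^ 2 * n = ((1 + t) * √n) ^ 2 := by rw [mul_pow, sq_sqrt n.cast_nonneg]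
    ext g
    simp only [Set.mem_ofPred_eq, hsq]
    exact (pow_le_pow_iff_left₀ (by positivity) (norm_nonneg g) two_ne_zero).symm
  calc (stdGaussian E).real {g | (1 + t) * √n ≤ ‖g‖}
      ≤ exp (-l * ((1 + t) ^ 2 * n)) * mgf (fun g => ‖g‖ ^ 2) (stdGaussian E) l := by
        rw [hset]
        exact measure_ge_le_exp_mul_mgf _ hl0 (integrable_exp_mul_norm_sq_stdGaussian hl)
    _ = exp (-(t * (2 + t) * n / 2)) * (1 + t) ^ n := by
        rw [mgf, integral_exp_mul_norm_sq_stdGaussian hl, h2l, sqrt_inv, sqrt_sq h1t.le, inv_inv]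
        congr 2
        rw [hl_def]
        field_simp
    _ ≤ exp (-(t * (2 + t) * n / 2)) * exp t ^ n := by
        gcongr
        linarith [add_one_le_exp t]
    _ = exp (-(t ^ 2 * n) / 2) := by
        rw [← exp_nat_mul, ← exp_add]
        ring_nf

lemma stdGaussian_map_inner {e : E} (he : ‖e‖ = 1) :
    (stdGaussian E).map (fun g => ⟪e, g⟫) = gaussianReal 0 1 := by
  have h := IsGaussian.map_eq_gaussianReal (μ := stdGaussian E) (innerSL ℝ e)
  rw [integral_strongDual_stdGaussian, variance_dual_stdGaussian, innerSL_apply_norm, he] at h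
  simpa using h

lemma ae_stdGaussian_inner_ne_zero {e : E} (he : ‖e‖ = 1) :
    ∀ᵐ g ∂stdGaussian E, ⟪e, g⟫ ≠ 0 := by
  have := nullSingletonClass_gaussianReal (μ := 0) one_ne_zero
  have hnull : stdGaussian E ((fun g => ⟪e, g⟫) ⁻¹' {0}) = 0 := by
    rw [← Measure.map_apply (by fun_prop) (measurableSet_singleton 0), stdGaussian_map_inner he,
      measure_singleton]
  exact measure_eq_zero_iff_ae_notMem.1 hnull

lemma stdGaussian_setOf_le_inner {e : E} (he : ‖e‖ = 1) (s : ℝ) :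
    stdGaussian E {g | s ≤ ⟪e, g⟫} = gaussianReal 0 1 {z | s ≤ z} := by
  rw [← stdGaussian_map_inner he]
  exact (Measure.map_apply (f := fun g => ⟪e, g⟫) (by fun_prop) measurableSet_Ici).symm

theorem measure_setOf_le_inner_eq_stdGaussian (μ : Measure E) [IsProbabilityMeasure μ]
    (hsphere : ∀ᵐ x ∂μ, ‖x‖ = 1) (hrot : ∀ O : E ≃ₗᵢ[ℝ] E, μ.map O = μ)
    {e : E} (he : ‖e‖ = 1) (r : ℝ) :
    μ {x | r ≤ ⟪x, e⟫} = stdGaussian E {g | r * ‖g‖ ≤ ⟪e, g⟫} := by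
  set P : Set (E × E) := {p | r * ‖p.2‖ ≤ ⟪p.1, p.2⟫}
  have hP : MeasurableSet P := measurableSet_le (by fun_prop) (by fun_prop)
  have hγ : ∀ O : E ≃ₗᵢ[ℝ] E, (stdGaussian E).map O = stdGaussian E := stdGaussian_map
  have hslice_left (x : E) (hx : ‖x‖ = 1) :
      stdGaussian E (Prod.mk x ⁻¹' P) = stdGaussian E {g | r * ‖g‖ ≤ ⟪e, g⟫} := by
    obtain ⟨O, hO⟩ := exists_linearIsometryEquiv_apply_eq (hx.trans he.symm)
    rw [← measure_preimage_linearIsometryEquiv hγ O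
      (measurableSet_le (by fun_prop) (by fun_prop))]
    congr 1
    ext g
    simp [P, ← hO, O.inner_map_map]
  have hslice_right (g : E) (hg : g ≠ 0) :
      μ ((fun x => (x, g)) ⁻¹' P) = μ {x | r ≤ ⟪x, e⟫} := by
    have hg0 : 0 < ‖g‖ := norm_pos_iff.2 hg
    have hu : ‖‖g‖⁻¹ • g‖ = ‖e‖ := by
      rw [norm_smul, norm_inv, norm_norm, inv_mul_cancel₀ hg0.ne', he]
    obtain ⟨O, hO⟩ := exists_linearIsometryEquiv_apply_eq hu
    rw [← measure_preimage_linearIsometryEquiv hrot O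
      (measurableSet_le (by fun_prop) (by fun_prop))]
    congr 1
    ext x
    simp [P, ← hO, O.inner_map_map, real_inner_smul_right, le_inv_mul_iff₀ hg0, mul_comm]
  calc μ {x | r ≤ ⟪x, e⟫} = μ.prod (stdGaussian E) P := by
        rw [Measure.prod_apply_symm hP, lintegral_congr_ae ((ae_stdGaussian_inner_ne_zero he).mono
          fun g hg => hslice_right g fun h => hg (by simp [h])), lintegral_const, measure_univ,
          mul_one]
    _ = stdGaussian E {g | r * ‖g‖ ≤ ⟪e, g⟫} := by
        rw [Measure.prod_apply hP, lintegral_congr_ae (hsphere.mono hslice_left), lintegral_const,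
          measure_univ, mul_one]

end

/-- Lower bound for spherical caps via the Gaussian coupling: for the uniform
(rotation-invariant) probability measure on `S^{d-1}`, `ε ∈ (0,1)` and `t > 0`,
`μ_d(ε/(1+t)) ≥ P(Z ≥ ε√d) − e^{−t²d/2}` with `Z` standard Gaussian. -/
theorem stmt8 (d : ℕ) (hd : 1 ≤ d) (ε t : ℝ) (hε : 0 < ε) (ht : 0 < t)
    (μ : Measure (EuclideanSpace ℝ (Fin d))) [IsProbabilityMeasure μ]
    (hsupp : μ {x : EuclideanSpace ℝ (Fin d) | ‖x‖ = 1}ᶜ = 0)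
    (hrot : ∀ O : EuclideanSpace ℝ (Fin d) ≃ₗᵢ[ℝ] EuclideanSpace ℝ (Fin d),
      Measure.map (fun x => O x) μ = μ) :
    ((gaussianReal 0 1) {z : ℝ | ε * Real.sqrt d ≤ z}).toReal
        - Real.exp (-(t ^ 2 * d) / 2)
      ≤ (μ {x : EuclideanSpace ℝ (Fin d) |
          ε / (1 + t) ≤ ⟪x, EuclideanSpace.single (⟨0, by omega⟩ : Fin d) 1⟫}).toReal := by
  set e : EuclideanSpace ℝ (Fin d) := EuclideanSpace.single ⟨0, by omega⟩ 1
  have he : ‖e‖ = 1 := by simp [e]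
  set γ := stdGaussian (EuclideanSpace ℝ (Fin d))
  have htail := stdGaussian_real_setOf_le_norm_le (E := EuclideanSpace ℝ (Fin d)) ht
  rw [finrank_euclideanSpace_fin] at htail
  have hsplit : {g | ε * √d ≤ ⟪e, g⟫}
      ⊆ {g | ε / (1 + t) * ‖g‖ ≤ ⟪e, g⟫} ∪ {g | (1 + t) * √d ≤ ‖g‖} := by
    intro g hg
    rcases le_or_gt ((1 + t) * √d) ‖g‖ with hlarge | hsmall
    · exact Or.inr hlarge
    · left
      calc ε / (1 + t) * ‖g‖ ≤ ε / (1 + t) * ((1 + t) * √d) := by gcongr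
        _ = ε * √d := by field_simp
        _ ≤ ⟪e, g⟫ := hg
  calc (gaussianReal 0 1 {z | ε * √d ≤ z}).toReal - exp (-(t ^ 2 * d) / 2)
      ≤ γ.real {g | ε * √d ≤ ⟪e, g⟫} - γ.real {g | (1 + t) * √d ≤ ‖g‖} := by
        rw [measureReal_def, stdGaussian_setOf_le_inner he]
        linarith
    _ ≤ γ.real {g | ε / (1 + t) * ‖g‖ ≤ ⟪e, g⟫} := by
        linarith [(measureReal_mono (μ := γ) hsplit).trans (measureReal_union_le _ _)]
    _ = (μ {x | ε / (1 + t) ≤ ⟪x, e⟫}).toReal := by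
        rw [measureReal_def, measure_setOf_le_inner_eq_stdGaussian μ hsupp hrot he]
end

section
/- Let H be a real inner product space, let T be a subset of the closed unit ball of H, let k ≥ 1 be an integer, and let 0 < ε ≤ 1. Suppose every point of conv(T) lies within distance ε/2 of conv_k(T) (i.e. conv(T) ⊆ conv_k(T) + (ε/2)·B(H)). Then log N(conv(T), ε) ≤ k·(log N(T, ε/4) + log(1/ε) + 4); equivalently, if T admits a finite ε/4-cover of cardinality N, then conv(T) admits a finite ε-cover of cardinality at most (12·e·N/ε)^k. -/
/-!
A point of `conv T` is `ε/2`-close to some `∑ lᵢ • tᵢ` with `k` points `tᵢ ∈ T`. Replacing each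
`tᵢ` by an `ε/4`-close net point `uᵢ` and rounding each weight `lᵢ` down to a multiple of `1/m`,
with `m = ⌈5k/ε⌉`, moves it by at most `ε/4 + k(1 + ε/4)/m ≤ ε/2`. The rounded weights are
`cᵢ/m` with `∑ cᵢ ≤ m`; by stars and bars there are `(m+k).choose k ≤ (e(m+k)/k)^k` of them, so
at most `(e(m+k)N/k)^k ≤ (12eN/ε)^k` points suffice.
-/

open Metric

open Finset

def simplexGrid (k m : ℕ) : Finset (Fin k → ℕ) :=
  (Fintype.piFinset fun _ => range (m + 1)).filter fun c => ∑ i, c i ≤ m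

theorem mem_simplexGrid {k m : ℕ} {c : Fin k → ℕ} : c ∈ simplexGrid k m ↔ ∑ i, c i ≤ m := by
  refine ⟨fun h => (mem_filter.1 h).2, fun h => mem_filter.2 ⟨?_, h⟩⟩
  rw [Fintype.mem_piFinset]
  intro i
  exact mem_range_succ_iff.2 ((single_le_sum (fun j _ => Nat.zero_le (c j)) (mem_univ i)).trans h)

theorem card_simplexGrid_le (k m : ℕ) : #(simplexGrid k m) ≤ (m + k).choose k := by
  classical
  -- Appending the slack `m - ∑ c` gives a composition of `m` into `k + 1` parts (stars and bars).
  let slack (c : Fin k → ℕ) : Fin (k + 1) →₀ ℕ :=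
    Finsupp.equivFunOnFinite.symm (Fin.snoc c (m - ∑ i, c i))
  have hmaps : Set.MapsTo slack (simplexGrid k m)
      ((univ : Finset (Fin (k + 1))).finsuppAntidiag m) := by
    intro c hc
    rw [mem_coe, mem_simplexGrid] at hc
    refine mem_coe.2 (mem_finsuppAntidiag.2 ⟨?_, subset_univ _⟩)
    simp only [slack, Finsupp.equivFunOnFinite_symm_apply_apply, Fin.sum_univ_castSucc,
      Fin.snoc_castSucc, Fin.snoc_last]
    omega
  have hinj : Set.InjOn slack (simplexGrid k m) := by
    intro c _ d _ h
    funext i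
    simpa [slack] using DFunLike.congr_fun h i.castSucc
  calc #(simplexGrid k m) ≤ #((univ : Finset (Fin (k + 1))).finsuppAntidiag m) :=
        card_le_card_of_injOn slack hmaps hinj
    _ = (m + k).choose k := by
        rw [card_finsuppAntidiag_nat_eq_choose, card_univ, Fintype.card_fin,
          show k + 1 + m - 1 = m + k by omega, Nat.choose_symm_add]

theorem exists_mem_simplexGrid_abs_sub_le {k m : ℕ} (hm : 0 < m) {l : Fin k → ℝ}
    (hl0 : ∀ i, 0 ≤ l i) (hl1 : ∑ i, l i = 1) :
    ∃ c ∈ simplexGrid k m, ∀ i, |l i - c i / m| ≤ 1 / m := by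
  have hm' : (0 : ℝ) < m := by exact_mod_cast hm
  refine ⟨fun i => ⌊m * l i⌋₊, mem_simplexGrid.2 ?_, fun i => ?_⟩
  · have hsum : ∑ i, (⌊m * l i⌋₊ : ℝ) ≤ m :=
      calc ∑ i, (⌊m * l i⌋₊ : ℝ) ≤ ∑ i, m * l i :=
            sum_le_sum fun i _ => Nat.floor_le (by have := hl0 i; positivity)
        _ = m := by rw [← mul_sum, hl1, mul_one]
    exact_mod_cast hsum
  · have hle : (⌊m * l i⌋₊ : ℝ) ≤ m * l i := Nat.floor_le (by have := hl0 i; positivity)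
    have hlt : m * l i < ⌊m * l i⌋₊ + 1 := Nat.lt_floor_add_one _
    have hdiff : l i - ⌊m * l i⌋₊ / m = (m * l i - ⌊m * l i⌋₊) / m := by field_simp
    rw [hdiff, abs_div, abs_of_pos hm', div_le_div_iff_of_pos_right hm', abs_le]
    constructor <;> linarith

theorem dist_sum_smul_le_s12 {E : Type*} [SeminormedAddCommGroup E] [NormedSpace ℝ E] {k : ℕ}
    {l a : Fin k → ℝ} {t u : Fin k → E} {δ η R : ℝ} (hl0 : ∀ i, 0 ≤ l i) (hl1 : ∑ i, l i = 1)
    (hla : ∀ i, |l i - a i| ≤ η) (htu : ∀ i, dist (t i) (u i) ≤ δ) (hu : ∀ i, ‖u i‖ ≤ R) :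
    dist (∑ i, l i • t i) (∑ i, a i • u i) ≤ δ + k * (η * R) := by
  have hterm : ∀ i, ‖l i • t i - a i • u i‖ ≤ l i * δ + η * R := by
    intro i
    calc ‖l i • t i - a i • u i‖ = ‖l i • (t i - u i) + (l i - a i) • u i‖ := by
          rw [smul_sub, sub_smul, sub_add_sub_cancel]
      _ ≤ ‖l i • (t i - u i)‖ + ‖(l i - a i) • u i‖ := norm_add_le _ _
      _ = l i * dist (t i) (u i) + |l i - a i| * ‖u i‖ := by
          rw [norm_smul, norm_smul, Real.norm_of_nonneg (hl0 i), Real.norm_eq_abs, dist_eq_norm]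
      _ ≤ l i * δ + η * R :=
          add_le_add (mul_le_mul_of_nonneg_left (htu i) (hl0 i))
            (mul_le_mul (hla i) (hu i) (norm_nonneg _) ((abs_nonneg _).trans (hla i)))
  calc dist (∑ i, l i • t i) (∑ i, a i • u i) = ‖∑ i, (l i • t i - a i • u i)‖ := by
        rw [dist_eq_norm, sum_sub_distrib]
    _ ≤ ∑ i, (l i * δ + η * R) := norm_sum_le_of_le _ fun i _ => hterm i
    _ = δ + k * (η * R) := by
        rw [sum_add_distrib, ← sum_mul, hl1, one_mul, sum_const, card_univ, Fintype.card_fin,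
          nsmul_eq_mul]

theorem exists_finset_forall_convk_dist_le {E : Type*} [SeminormedAddCommGroup E]
    [NormedSpace ℝ E] {T : Set E} {r δ : ℝ} (hT : T ⊆ closedBall 0 r) (U : Finset E)
    (hU : ∀ x ∈ T, ∃ u ∈ U, dist x u ≤ δ) (k : ℕ) {m : ℕ} (hm : 0 < m) :
    ∃ W : Finset E, #W ≤ (m + k).choose k * #U ^ k ∧
      ∀ q ∈ convk T k, ∃ w ∈ W, dist q w ≤ δ + k * (1 / m * (r + δ)) := by
  classical
  refine ⟨(simplexGrid k m ×ˢ Fintype.piFinset fun _ => U).image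
    fun p => ∑ i, (p.1 i / m : ℝ) • p.2 i, ?_, ?_⟩
  · calc _ ≤ #(simplexGrid k m ×ˢ Fintype.piFinset fun _ : Fin k => U) := card_image_le
      _ ≤ (m + k).choose k * #U ^ k := by
          rw [card_product, Fintype.card_piFinset, prod_const, card_univ, Fintype.card_fin]
          exact Nat.mul_le_mul_right _ (card_simplexGrid_le k m)
  · rintro q ⟨t, l, ht, hl0, hl1, rfl⟩
    choose u hu htu using fun i => hU (t i) (ht i)
    obtain ⟨c, hc, hlc⟩ := exists_mem_simplexGrid_abs_sub_le hm hl0 hl1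
    have hun : ∀ i, ‖u i‖ ≤ r + δ := fun i =>
      (norm_le_of_mem_closedBall (mem_closedBall'.2 (htu i))).trans
        (add_le_add_left (mem_closedBall_zero_iff.1 (hT (ht i))) _)
    refine ⟨∑ i, (c i / m : ℝ) • u i,
      mem_image.2 ⟨(c, u), mem_product.2 ⟨hc, Fintype.mem_piFinset.2 hu⟩, rfl⟩, ?_⟩
    exact dist_sum_smul_le_s12 hl0 hl1 hlc htu hun

/-- Infinite vertex sets: if `T` is a subset of the unit ball of a real inner product
space, every point of `conv(T)` lies within `ε/2` of `conv_k(T)`, and `T` admits a finite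
`ε/4`-cover of cardinality `N`, then `conv(T)` admits a finite `ε`-cover of cardinality at
most `(12·e·N/ε)^k` — i.e. `log N(conv(T),ε) ≤ k(log N(T,ε/4) + log(1/ε) + 4)`. -/
theorem stmt12 {H : Type*} [NormedAddCommGroup H] [InnerProductSpace ℝ H]
    (T : Set H) (hT : T ⊆ closedBall (0 : H) 1)
    (k : ℕ) (hk : 1 ≤ k) (ε : ℝ) (hε : 0 < ε) (hε1 : ε ≤ 1)
    (hcomp : ∀ x ∈ convexHull ℝ T, ∃ q ∈ convk T k, dist x q ≤ ε / 2)
    (N : ℕ) (U : Finset H) (hUcard : U.card = N)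
    (hUcover : ∀ x ∈ T, ∃ u ∈ U, dist x u ≤ ε / 4) :
    ∃ W : Finset H, (W.card : ℝ) ≤ (12 * Real.exp 1 * N / ε) ^ k ∧
      ∀ x ∈ convexHull ℝ T, ∃ w ∈ W, dist x w ≤ ε := by
  have hk' : (1 : ℝ) ≤ k := by exact_mod_cast hk
  set m := ⌈5 * k / ε⌉₊
  have hm_ge : 5 * k / ε ≤ m := Nat.le_ceil _
  have hm_lt : (m : ℝ) < 5 * k / ε + 1 := Nat.ceil_lt_add_one (by positivity)
  have hm : 0 < m := by exact_mod_cast (by positivity : (0 : ℝ) < 5 * k / ε).trans_le hm_ge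
  have hm' : (0 : ℝ) < m := by exact_mod_cast hm
  obtain ⟨W, hWcard, hW⟩ := exists_finset_forall_convk_dist_le hT U hUcover k hm
  refine ⟨W, ?_, fun x hx => ?_⟩
  · have hmk : (m + k) * ε ≤ 12 * k := by
      have : (m - 1) * ε < 5 * k := (lt_div_iff₀ hε).1 (by linarith)
      nlinarith
    calc (#W : ℝ) ≤ (m + k).choose k * N ^ k := by rw [← hUcard]; exact_mod_cast hWcard
      _ ≤ (Real.exp 1 * (m + k) / k) ^ k * N ^ k := by
          gcongr
          exact_mod_cast Nat.choose_le_exp_mul_div_pow (m + k) k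
      _ = (Real.exp 1 * N * ((m + k) / k)) ^ k := by rw [← mul_pow]; ring
      _ ≤ (Real.exp 1 * N * (12 / ε)) ^ k := by
          gcongr (Real.exp 1 * N * ?_) ^ k
          rw [div_le_div_iff₀ (by positivity) hε]
          linarith
      _ = (12 * Real.exp 1 * N / ε) ^ k := by ring
  · obtain ⟨q, hq, hxq⟩ := hcomp x hx
    obtain ⟨w, hw, hqw⟩ := hW q hq
    have hround : k * (1 / m * (1 + ε / 4)) ≤ ε / 4 := by
      rw [div_le_iff₀ hε] at hm_ge
      rw [← mul_assoc, ← mul_div_assoc, mul_one, div_mul_eq_mul_div, div_le_iff₀ hm']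
      nlinarith
    exact ⟨w, hw, by linarith [dist_triangle x q w]⟩
end
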